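/- The Euler product 𝒢(s) := ∏_{p odd prime} (1 − p^{−2}·(1 − p^{−1−s})/(1 − p^{−2−s})) converges (the family of factors is multipliable) for every s ∈ ℂ with Re(s) > −1; the function 𝒢 so defined is holomorphic (complex differentiable) on the half-plane {s : Re(s) > −1}; and there is a constant C > 0 such that |𝒢(s)| ≤ C for all s with Re(s) > −1. -/

import Mathlib

/-!
On `Re s > -1` we have `‖p^(-1-s)‖ ≤ 1` and `‖p^(-2-s)‖ ≤ 1/2`, so every factor is within
`4 / p^2 ≤ 1/2` of `1`, uniformly in `s`. Hence `‖log (GFactor s p)‖ ≤ 6 / p^2`, a summable majorant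
independent of `s`: the series of logarithms converges locally uniformly to a holomorphic function
of real part at most `6 ∑ p⁻²`, and the product is its exponential.
-/

/-- The Euler factor of `𝒢(s)` at an odd prime `p`. -/
noncomputable def GFactor (s : ℂ) (p : {p : ℕ // p.Prime ∧ Odd p}) : ℂ :=
  (1 : ℂ) - (p.1 : ℂ) ^ (-(2 : ℂ)) *
    ((1 - (p.1 : ℂ) ^ (-(1 : ℂ) - s)) / (1 - (p.1 : ℂ) ^ (-(2 : ℂ) - s)))

open Complex

namespace Complex

lemma norm_log_le_of_norm_sub_one_le {z : ℂ} {c : ℝ} (hz : ‖z - 1‖ ≤ c) (hc : c ≤ 1 / 2) :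
    ‖log z‖ ≤ 3 / 2 * c := by
  have := norm_log_one_add_half_le_self (hz.trans hc)
  rw [add_sub_cancel] at this
  linarith

lemma mem_slitPlane_of_norm_sub_one_le {z : ℂ} {c : ℝ} (hz : ‖z - 1‖ ≤ c) (hc : c ≤ 1 / 2) :
    z ∈ slitPlane := by
  simpa using mem_slitPlane_of_norm_lt_one (hz.trans_lt (hc.trans_lt (by norm_num)))

section ProdNearOne

variable {ι : Type*} {u : ι → ℝ}

lemma summable_log_of_norm_sub_one_le {g : ι → ℂ} (hu : Summable u) (hu_le : ∀ i, u i ≤ 1 / 2)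
    (hg : ∀ i, ‖g i - 1‖ ≤ u i) : Summable fun i ↦ log (g i) :=
  (hu.mul_left (3 / 2)).of_norm_bounded fun i ↦ norm_log_le_of_norm_sub_one_le (hg i) (hu_le i)

lemma tprod_eq_cexp_tsum_log_of_norm_sub_one_le {g : ι → ℂ} (hu : Summable u)
    (hu_le : ∀ i, u i ≤ 1 / 2) (hg : ∀ i, ‖g i - 1‖ ≤ u i) :
    ∏' i, g i = cexp (∑' i, log (g i)) :=
  (cexp_tsum_eq_tprod
    (fun i ↦ slitPlane_ne_zero (mem_slitPlane_of_norm_sub_one_le (hg i) (hu_le i)))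
    (summable_log_of_norm_sub_one_le hu hu_le hg)).symm

lemma norm_tprod_le_of_norm_sub_one_le {g : ι → ℂ} (hu : Summable u)
    (hu_le : ∀ i, u i ≤ 1 / 2) (hg : ∀ i, ‖g i - 1‖ ≤ u i) :
    ‖∏' i, g i‖ ≤ Real.exp (3 / 2 * ∑' i, u i) := by
  rw [tprod_eq_cexp_tsum_log_of_norm_sub_one_le hu hu_le hg, ← tsum_mul_left]
  refine (norm_exp_le_exp_norm _).trans (Real.exp_le_exp.mpr ?_)
  exact tsum_of_norm_bounded (hu.mul_left _).hasSum fun i ↦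
    norm_log_le_of_norm_sub_one_le (hg i) (hu_le i)

lemma differentiableOn_tprod_of_norm_sub_one_le {f : ι → ℂ → ℂ} {U : Set ℂ} (hU : IsOpen U)
    (hf : ∀ i, DifferentiableOn ℂ (f i) U) (hu : Summable u) (hu_le : ∀ i, u i ≤ 1 / 2)
    (hfu : ∀ i, ∀ s ∈ U, ‖f i s - 1‖ ≤ u i) :
    DifferentiableOn ℂ (fun s ↦ ∏' i, f i s) U := by
  have hlog : DifferentiableOn ℂ (fun s ↦ ∑' i, log (f i s)) U :=
    differentiableOn_tsum_of_summable_norm (hu.mul_left (3 / 2))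
      (fun i ↦ (hf i).clog fun s hs ↦ mem_slitPlane_of_norm_sub_one_le (hfu i s hs) (hu_le i)) hU
      fun i s hs ↦ norm_log_le_of_norm_sub_one_le (hfu i s hs) (hu_le i)
  exact hlog.cexp.congr fun s hs ↦
    tprod_eq_cexp_tsum_log_of_norm_sub_one_le hu hu_le fun i ↦ hfu i s hs

end ProdNearOne

lemma one_half_le_norm_one_sub_prime_cpow {p : ℕ} (hp : p.Prime) {s : ℂ} (hs : 1 < s.re) :
    1 / 2 ≤ ‖1 - (p : ℂ) ^ (-s)‖ := by
  have := norm_prime_cpow_le_one_half ⟨p, hp⟩ hs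
  have := norm_sub_norm_le (1 : ℂ) ((p : ℂ) ^ (-s))
  rw [norm_one] at this
  linarith

lemma norm_one_sub_natCast_cpow_le_two {n : ℕ} (hn : 0 < n) {s : ℂ} (hs : s.re ≤ 0) :
    ‖1 - (n : ℂ) ^ s‖ ≤ 2 := by
  have : ‖(n : ℂ) ^ s‖ ≤ 1 := by
    simpa using norm_natCast_cpow_le_norm_natCast_cpow_of_pos hn (z := 0) (by simpa using hs)
  calc ‖1 - (n : ℂ) ^ s‖ ≤ ‖(1 : ℂ)‖ + ‖(n : ℂ) ^ s‖ := norm_sub_le _ _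
    _ ≤ 2 := by rw [norm_one]; linarith

end Complex

lemma Nat.Prime.three_le_of_odd {p : ℕ} (hp : p.Prime) (hodd : Odd p) : 3 ≤ p := by
  have := hp.two_le
  have : p ≠ 2 := by rintro rfl; exact Nat.not_odd_iff_even.mpr even_two hodd
  omega

namespace GFactor

variable (p : {p : ℕ // p.Prime ∧ Odd p}) {s : ℂ}

lemma one_half_le_norm_denom (hs : -1 < s.re) : 1 / 2 ≤ ‖1 - (p.1 : ℂ) ^ (-(2 : ℂ) - s)‖ := by
  rw [← neg_add']
  exact one_half_le_norm_one_sub_prime_cpow p.2.1 (by simp; linarith)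

lemma norm_sub_one_le (hs : -1 < s.re) : ‖GFactor s p - 1‖ ≤ 4 / (p.1 : ℝ) ^ 2 := by
  have hp : 0 < p.1 := p.2.1.pos
  have hnum : ‖1 - (p.1 : ℂ) ^ (-(1 : ℂ) - s)‖ ≤ 2 :=
    norm_one_sub_natCast_cpow_le_two hp (by simp; linarith)
  have hp2 : ‖(p.1 : ℂ) ^ (-(2 : ℂ))‖ = 1 / (p.1 : ℝ) ^ 2 := by
    rw [norm_natCast_cpow_of_pos hp, neg_re, re_ofNat, Real.rpow_neg (by positivity),
      Real.rpow_two, one_div]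
  have hquot : ‖(1 - (p.1 : ℂ) ^ (-(1 : ℂ) - s)) / (1 - (p.1 : ℂ) ^ (-(2 : ℂ) - s))‖ ≤ 4 := by
    rw [norm_div]
    calc _ ≤ 2 / (1 / 2) := div_le_div₀ (by norm_num) hnum (by norm_num) (one_half_le_norm_denom p hs)
      _ = 4 := by norm_num
  rw [GFactor, sub_sub_cancel_left, norm_neg, norm_mul, hp2]
  calc _ ≤ 1 / (p.1 : ℝ) ^ 2 * 4 := by gcongr
    _ = 4 / (p.1 : ℝ) ^ 2 := by ring

lemma four_div_sq_le_half : 4 / (p.1 : ℝ) ^ 2 ≤ 1 / 2 := by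
  have : (3 : ℝ) ≤ p.1 := by exact_mod_cast p.2.1.three_le_of_odd p.2.2
  rw [div_le_div_iff₀ (by positivity) (by norm_num)]
  nlinarith

lemma summable_four_div_sq : Summable fun p : {p : ℕ // p.Prime ∧ Odd p} ↦ 4 / (p.1 : ℝ) ^ 2 :=
  ((Real.summable_one_div_nat_pow.mpr one_lt_two).mul_left 4 |>.subtype _).congr fun p ↦ by
    simp only [Function.comp_apply]; ring

lemma differentiableOn : DifferentiableOn ℂ (GFactor · p) {s : ℂ | -1 < s.re} := by
  have hp : (p.1 : ℂ) ≠ 0 := by exact_mod_cast p.2.1.ne_zero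
  unfold GFactor
  fun_prop (disch := first
    | exact Or.inl hp
    | exact fun s hs ↦ norm_pos_iff.mp ((one_half_le_norm_denom p hs).trans_lt' (by norm_num)))

end GFactor

/-- The Euler product `𝒢(s) = ∏_{p odd} (1 − p^{−2}(1−p^{−1−s})/(1−p^{−2−s}))` converges
for `Re(s) > −1`, defines a holomorphic function on this half-plane, and is bounded there. -/
theorem GEuler_properties :
    (∀ s : ℂ, -1 < s.re → Multipliable (GFactor s)) ∧
    DifferentiableOn ℂ (fun s : ℂ => ∏' p : {p : ℕ // p.Prime ∧ Odd p}, GFactor s p)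
      {s : ℂ | -1 < s.re} ∧
    (∃ C : ℝ, 0 < C ∧ ∀ s : ℂ, -1 < s.re →
      ‖∏' p : {p : ℕ // p.Prime ∧ Odd p}, GFactor s p‖ ≤ C) := by
  have hU : IsOpen {s : ℂ | -1 < s.re} := isOpen_lt continuous_const continuous_re
  have hu := GFactor.summable_four_div_sq
  have hu_le := GFactor.four_div_sq_le_half
  refine ⟨fun s hs ↦ ?_, ?_,
    ⟨Real.exp (3 / 2 * ∑' p : {p : ℕ // p.Prime ∧ Odd p}, 4 / (p.1 : ℝ) ^ 2), Real.exp_pos _,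
      fun s hs ↦ ?_⟩⟩
  · exact multipliable_of_summable_log
      (summable_log_of_norm_sub_one_le hu hu_le fun p ↦ GFactor.norm_sub_one_le p hs)
  · exact differentiableOn_tprod_of_norm_sub_one_le hU GFactor.differentiableOn hu hu_le
      fun p s hs ↦ GFactor.norm_sub_one_le p hs
  · exact norm_tprod_le_of_norm_sub_one_le hu hu_le fun p ↦ GFactor.norm_sub_one_le p hs
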